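/- arXiv:1908.02046 — 5 statements merged into one kernel-verified Lean document; each statement's English description precedes it below -/
import Mathlib

section
/- Let H be a real symmetric N×N matrix and u ≠ v two indices. Then (H^k)_{u,u} = (H^k)_{v,v} for all non-negative integers k if and only if for every eigenvalue λ of H, the sum of |⟨λ_i|u⟩|² over an orthonormal basis {|λ_i⟩} of the λ-eigenspace equals the corresponding sum of |⟨λ_i|v⟩|². -/
open Matrix

section AuxCospectral

lemma aux_sum_dotProduct {N : ℕ} {ι : Type*} (s : Finset ι) (f : ι → (Fin N → ℝ))
    (y : Fin N → ℝ) :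
    dotProduct (∑ i ∈ s, f i) y = ∑ i ∈ s, dotProduct (f i) y := by
  simp only [dotProduct, Finset.sum_apply, Finset.sum_mul]
  exact Finset.sum_comm

lemma aux_ortho_expand {N : ℕ} {ι : Type*} [Fintype ι] [DecidableEq ι]
    (f : ι → (Fin N → ℝ))
    (hf : ∀ i j, dotProduct (f i) (f j) = if i = j then (1:ℝ) else 0)
    {x : Fin N → ℝ} (hx : x ∈ Submodule.span ℝ (Set.range f)) :
    x = ∑ i, (dotProduct x (f i)) • f i := by
  induction hx using Submodule.span_induction with
  | mem y hy =>
      obtain ⟨i0, rfl⟩ := hy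
      simp [hf, ite_smul]
  | zero => simp
  | add y z hy hz ihy ihz =>
      nth_rw 1 [ihy, ihz]
      rw [← Finset.sum_add_distrib]
      refine Finset.sum_congr rfl fun i _ => ?_
      rw [add_dotProduct, add_smul]
  | smul a y hy ihy =>
      nth_rw 1 [ihy]
      rw [Finset.smul_sum]
      refine Finset.sum_congr rfl fun i _ => ?_
      rw [smul_dotProduct, smul_smul]
      rfl

lemma aux_ortho_pair_sum {N : ℕ} {ι κ : Type*} [Fintype ι] [DecidableEq ι] [Fintype κ]
    [DecidableEq κ]
    (f : ι → (Fin N → ℝ)) (g : κ → (Fin N → ℝ))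
    (hf : ∀ i j, dotProduct (f i) (f j) = if i = j then (1:ℝ) else 0)
    (hg : ∀ i j, dotProduct (g i) (g j) = if i = j then (1:ℝ) else 0)
    (hfg : ∀ i, f i ∈ Submodule.span ℝ (Set.range g))
    (hgf : ∀ j, g j ∈ Submodule.span ℝ (Set.range f))
    (u w : Fin N) :
    ∑ i, f i u * f i w = ∑ j, g j u * g j w := by
  set c : ι → κ → ℝ := fun i j => dotProduct (g j) (f i) with hc
  have key : ∀ j j', (∑ i, c i j * c i j') = if j = j' then (1:ℝ) else 0 := by
    intro j j'
    have h1 := aux_ortho_expand f hf (hgf j)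
    calc (∑ i, c i j * c i j')
        = dotProduct (∑ i, (c i j) • f i) (g j') := by
          rw [aux_sum_dotProduct]
          refine Finset.sum_congr rfl fun i _ => ?_
          rw [smul_dotProduct, smul_eq_mul, hc]
          rw [dotProduct_comm (f i) (g j')]
      _ = dotProduct (g j) (g j') := by rw [← h1]
      _ = _ := hg j j'
  have hexp : ∀ i, ∀ y : Fin N, f i y = ∑ j, c i j * g j y := by
    intro i y
    have h2 := aux_ortho_expand g hg (hfg i)
    calc f i y = (∑ j, (dotProduct (f i) (g j)) • g j) y := by rw [← h2]
      _ = ∑ j, c i j * g j y := by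
          rw [Finset.sum_apply]
          refine Finset.sum_congr rfl fun j _ => ?_
          rw [Pi.smul_apply, smul_eq_mul, hc, dotProduct_comm]
  calc ∑ i, f i u * f i w
      = ∑ i, ∑ j, ∑ j', (c i j * c i j') * (g j u * g j' w) := by
        refine Finset.sum_congr rfl fun i _ => ?_
        rw [hexp i u, hexp i w, Finset.sum_mul_sum]
        refine Finset.sum_congr rfl fun j _ => Finset.sum_congr rfl fun j' _ => by ring
    _ = ∑ j, ∑ j', (∑ i, c i j * c i j') * (g j u * g j' w) := by
        rw [Finset.sum_comm]
        refine Finset.sum_congr rfl fun j _ => ?_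
        rw [Finset.sum_comm]
        refine Finset.sum_congr rfl fun j' _ => ?_
        rw [Finset.sum_mul]
    _ = ∑ j, g j u * g j w := by
        refine Finset.sum_congr rfl fun j _ => ?_
        rw [Finset.sum_congr rfl fun j' _ => by rw [key j j']]
        simp [ite_mul]

lemma aux_pow_diag {N : ℕ} (H : Matrix (Fin N) (Fin N) ℝ) (g : Fin N → (Fin N → ℝ))
    (μ : Fin N → ℝ)
    (heig : ∀ i, H.mulVec (g i) = μ i • g i)
    (hexp : ∀ w : Fin N, Pi.single w (1:ℝ) = ∑ i, (g i w) • g i)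
    (k : ℕ) (u w : Fin N) :
    (H ^ k) u w = ∑ i, μ i ^ k * (g i u * g i w) := by
  have hpow : ∀ i, (H ^ k).mulVec (g i) = (μ i ^ k) • g i := by
    intro i
    induction k with
    | zero => simp [Matrix.one_mulVec]
    | succ k ih =>
        rw [pow_succ', ← Matrix.mulVec_mulVec, ih, Matrix.mulVec_smul, heig, smul_smul,
          ← pow_succ]
  have h1 : (H ^ k) u w = ((H ^ k).mulVec (Pi.single w 1)) u := by
    rw [Matrix.mulVec_single]
    simp
  rw [h1, hexp w]
  have h2 : (H ^ k).mulVec (∑ i, (g i w) • g i) = ∑ i, (g i w) • ((μ i ^ k) • g i) := by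
    rw [← Matrix.mulVecLin_apply, map_sum]
    exact Finset.sum_congr rfl fun i _ => by
      rw [Matrix.mulVecLin_apply, Matrix.mulVec_smul, hpow i]
  rw [h2, Finset.sum_apply]
  exact Finset.sum_congr rfl fun i _ => by simp [smul_smul]; ring

lemma aux_fiber_span {N : ℕ} (H : Matrix (Fin N) (Fin N) ℝ) (hH : H.IsSymm)
    (g : Fin N → (Fin N → ℝ)) (μ : Fin N → ℝ)
    (heig : ∀ i, H.mulVec (g i) = μ i • g i)
    (hfull : ∀ x : Fin N → ℝ, x = ∑ i, (dotProduct x (g i)) • g i)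
    (lam : ℝ) {x : Fin N → ℝ} (hx : H.mulVec x = lam • x) :
    x ∈ Submodule.span ℝ (Set.range (fun j : {i // μ i = lam} => g j.1)) := by
  classical
  have hcoef : ∀ i, μ i ≠ lam → dotProduct x (g i) = 0 := by
    intro i hi
    have h1 : dotProduct x (H.mulVec (g i)) = μ i * dotProduct x (g i) := by
      rw [heig i, dotProduct_smul, smul_eq_mul]
    have h2 : dotProduct x (H.mulVec (g i)) = lam * dotProduct x (g i) := by
      rw [dotProduct_mulVec, ← hH.eq, Matrix.vecMul_transpose, hx,
        smul_dotProduct, smul_eq_mul]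
    have := h1.symm.trans h2
    rcases mul_eq_mul_right_iff.mp this with h | h
    · exact absurd h hi
    · exact h
  have hx2 : x = ∑ i ∈ Finset.univ.filter (fun i => μ i = lam),
      (dotProduct x (g i)) • g i := by
    refine (hfull x).trans (Finset.sum_subset (Finset.filter_subset _ _) (fun i _ hi => ?_)).symm
    have : μ i ≠ lam := by simpa using hi
    rw [hcoef i this, zero_smul]
  rw [hx2]
  refine Submodule.sum_mem _ (fun i hi => Submodule.smul_mem _ _ (Submodule.subset_span ?_))
  exact ⟨⟨i, by simpa using hi⟩, rfl⟩

lemma aux_moments_eq {n : ℕ} (μ : Fin n → ℝ) (a b : Fin n → ℝ)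
    (h : ∀ k : ℕ, ∑ i, μ i ^ k * a i = ∑ i, μ i ^ k * b i) (lam : ℝ) :
    ∑ i ∈ Finset.univ.filter (fun i => μ i = lam), a i
      = ∑ i ∈ Finset.univ.filter (fun i => μ i = lam), b i := by
  classical
  have hpoly : ∀ p : Polynomial ℝ,
      ∑ i, p.eval (μ i) * a i = ∑ i, p.eval (μ i) * b i := by
    intro p
    have hev : ∀ x : ℝ, p.eval x = ∑ k ∈ Finset.range (p.natDegree + 1), p.coeff k * x ^ k :=
      fun x => Polynomial.eval_eq_sum_range (p := p) x
    calc ∑ i, p.eval (μ i) * a i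
        = ∑ k ∈ Finset.range (p.natDegree + 1), p.coeff k * ∑ i, μ i ^ k * a i := by
          simp_rw [hev, Finset.sum_mul, Finset.mul_sum]
          rw [Finset.sum_comm]
          exact Finset.sum_congr rfl fun i _ => Finset.sum_congr rfl fun k _ => by ring
      _ = ∑ k ∈ Finset.range (p.natDegree + 1), p.coeff k * ∑ i, μ i ^ k * b i := by
          exact Finset.sum_congr rfl fun k _ => by rw [h k]
      _ = ∑ i, p.eval (μ i) * b i := by
          simp_rw [hev, Finset.sum_mul, Finset.mul_sum]
          rw [Finset.sum_comm]
          exact Finset.sum_congr rfl fun k _ => Finset.sum_congr rfl fun i _ => by ring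
  by_cases hlam : lam ∈ Finset.image μ Finset.univ
  · set p := Lagrange.basis (Finset.image μ Finset.univ) id lam with hp
    have hevp : ∀ i, p.eval (μ i) = if μ i = lam then 1 else 0 := by
      intro i
      by_cases hi : μ i = lam
      · rw [hi, if_pos rfl]
        have := Lagrange.eval_basis_self (v := id) (s := Finset.image μ Finset.univ)
          (Set.injOn_id _) hlam
        simpa using this
      · rw [if_neg hi]
        have := Lagrange.eval_basis_of_ne (s := Finset.image μ Finset.univ) (v := id)
          (i := lam) (j := μ i) (Ne.symm hi) (Finset.mem_image_of_mem μ (Finset.mem_univ i))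
        simpa using this
    have := hpoly p
    simp_rw [hevp, ite_mul, one_mul, zero_mul] at this
    rwa [Finset.sum_filter, Finset.sum_filter]
  · have hempty : Finset.univ.filter (fun i => μ i = lam) = ∅ := by
      refine Finset.filter_eq_empty_iff.mpr fun i _ => ?_
      intro hi
      exact hlam (hi ▸ Finset.mem_image_of_mem μ (Finset.mem_univ i))
    simp [hempty]

end AuxCospectral

/-- For a real symmetric matrix `H`, vertices `u ≠ v` are cospectral
(`(H^k)_{u,u} = (H^k)_{v,v}` for all `k`) if and only if, for every `λ` and every
orthonormal basis `f` of the `λ`-eigenspace, the sums of squares of the `u`-components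
and of the `v`-components of the basis vectors agree. -/
theorem cospectral_iff_eigenbasis_sums {N : ℕ} (H : Matrix (Fin N) (Fin N) ℝ)
    (hH : H.IsSymm) (u v : Fin N) (huv : u ≠ v) :
    (∀ k : ℕ, (H ^ k) u u = (H ^ k) v v) ↔
      ∀ (lam : ℝ) (m : ℕ) (f : Fin m → (Fin N → ℝ)),
        (∀ i, H.mulVec (f i) = lam • f i) →
        (∀ i j, dotProduct (f i) (f j) = if i = j then (1 : ℝ) else 0) →
        (∀ x : Fin N → ℝ, H.mulVec x = lam • x → x ∈ Submodule.span ℝ (Set.range f)) →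
        ∑ i, (f i u) ^ 2 = ∑ i, (f i v) ^ 2 := by
  classical
  have hHerm : H.IsHermitian := by
    rw [Matrix.IsHermitian, conjTranspose]
    exact isHermitian_iff_isSymm.mpr hH
  set b := hHerm.eigenvectorBasis with hb
  set μ := hHerm.eigenvalues with hμ
  set g : Fin N → (Fin N → ℝ) := fun i => ⇑(b i) with hg
  have heig : ∀ i, H.mulVec (g i) = μ i • g i := fun i => hHerm.mulVec_eigenvectorBasis i
  have hgortho : ∀ i j, dotProduct (g i) (g j) = if i = j then (1:ℝ) else 0 := by
    intro i j
    have := b.orthonormal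
    rw [orthonormal_iff_ite] at this
    rw [← this i j]
    simp [dotProduct, PiLp.inner_apply, RCLike.inner_apply, g]
    exact Finset.sum_congr rfl fun x _ => mul_comm _ _
  have hfull : ∀ x : Fin N → ℝ, x = ∑ i, (dotProduct x (g i)) • g i := by
    intro x
    have h := b.sum_repr' (WithLp.toLp 2 x)
    have h2 : ∀ i, (inner ℝ (b i) (WithLp.toLp 2 x) : ℝ)
        = dotProduct x (g i) := by
      intro i
      simp [PiLp.inner_apply, RCLike.inner_apply, dotProduct, g, mul_comm]
    calc x = WithLp.ofLp (∑ i, (inner ℝ (b i) (WithLp.toLp 2 x) : ℝ) • b i) := by rw [h]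
      _ = ∑ i, (dotProduct x (g i)) • g i := by
          simp only [WithLp.ofLp_sum, WithLp.ofLp_smul, h2]
          rfl
  have hexp : ∀ w : Fin N, Pi.single w (1:ℝ) = ∑ i, (g i w) • g i := by
    intro w
    have hdot : ∀ i, dotProduct (Pi.single w (1:ℝ)) (g i) = g i w := by
      intro i
      simp [dotProduct, Pi.single_apply, ite_mul]
    exact (hfull (Pi.single w 1)).trans
      (Finset.sum_congr rfl fun i _ => by rw [hdot i])
  constructor
  · -- forward
    intro h lam m f hfeig hforth hfspan
    have hmom := aux_moments_eq μ (fun i => g i u * g i u) (fun i => g i v * g i v)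
      (fun k => by
        rw [← aux_pow_diag H g μ heig hexp k u u, ← aux_pow_diag H g μ heig hexp k v v]
        exact h k) lam
    set gsub : {i // μ i = lam} → (Fin N → ℝ) := fun j => g j.1 with hgsub
    have hsubortho : ∀ j j', dotProduct (gsub j) (gsub j')
        = if j = j' then (1:ℝ) else 0 := by
      intro j j'
      rw [hgortho]
      simp [Subtype.ext_iff]
    have hspan1 : ∀ i, f i ∈ Submodule.span ℝ (Set.range gsub) :=
      fun i => aux_fiber_span H hH g μ heig hfull lam (hfeig i)
    have hspan2 : ∀ j, gsub j ∈ Submodule.span ℝ (Set.range f) :=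
      fun j => hfspan (g j.1) (by rw [heig, j.2])
    have keyu := aux_ortho_pair_sum f gsub hforth hsubortho hspan1 hspan2 u u
    have keyv := aux_ortho_pair_sum f gsub hforth hsubortho hspan1 hspan2 v v
    have hsubu : (∑ j : {i // μ i = lam}, gsub j u * gsub j u)
        = ∑ i ∈ Finset.univ.filter (fun i => μ i = lam), g i u * g i u :=
      (Finset.sum_subtype _ (by simp) (fun i => g i u * g i u)).symm
    have hsubv : (∑ j : {i // μ i = lam}, gsub j v * gsub j v)
        = ∑ i ∈ Finset.univ.filter (fun i => μ i = lam), g i v * g i v :=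
      (Finset.sum_subtype _ (by simp) (fun i => g i v * g i v)).symm
    calc ∑ i, (f i u) ^ 2 = ∑ i, f i u * f i u := by simp [pow_two]
      _ = ∑ j : {i // μ i = lam}, gsub j u * gsub j u := keyu
      _ = ∑ i ∈ Finset.univ.filter (fun i => μ i = lam), g i u * g i u := hsubu
      _ = ∑ i ∈ Finset.univ.filter (fun i => μ i = lam), g i v * g i v := hmom
      _ = ∑ j : {i // μ i = lam}, gsub j v * gsub j v := hsubv.symm
      _ = ∑ i, f i v * f i v := keyv.symm
      _ = ∑ i, (f i v) ^ 2 := by simp [pow_two]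
  · -- backward
    intro h k
    rw [aux_pow_diag H g μ heig hexp k u u, aux_pow_diag H g μ heig hexp k v v]
    rw [← Finset.sum_fiberwise_of_maps_to
      (fun i _ => Finset.mem_image_of_mem μ (Finset.mem_univ i))
      (fun i => μ i ^ k * (g i u * g i u)),
      ← Finset.sum_fiberwise_of_maps_to
      (fun i _ => Finset.mem_image_of_mem μ (Finset.mem_univ i))
      (fun i => μ i ^ k * (g i v * g i v))]
    refine Finset.sum_congr rfl fun lam hlam => ?_
    have hfib : ∀ w : Fin N,
        ∑ i ∈ Finset.univ.filter (fun i => μ i = lam), μ i ^ k * (g i w * g i w)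
          = lam ^ k * ∑ i ∈ Finset.univ.filter (fun i => μ i = lam), g i w * g i w := by
      intro w
      rw [Finset.mul_sum]
      refine Finset.sum_congr rfl fun i hi => ?_
      have : μ i = lam := by simpa using hi
      rw [this]
    rw [hfib u, hfib v]
    congr 1
    -- apply hypothesis with the sub-family of the eigenbasis
    set m := Fintype.card {i // μ i = lam} with hm
    set e : Fin m ≃ {i // μ i = lam} := (Fintype.equivFin {i // μ i = lam}).symm with he
    set f : Fin m → (Fin N → ℝ) := fun j => g (e j).1 with hf
    have hfeig : ∀ j, H.mulVec (f j) = lam • f j := by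
      intro j
      show H.mulVec (g (e j).1) = lam • g (e j).1
      rw [heig, (e j).2]
    have hforth : ∀ j j', dotProduct (f j) (f j') = if j = j' then (1:ℝ) else 0 := by
      intro j j'
      show dotProduct (g (e j).1) (g (e j').1) = _
      rw [hgortho]
      by_cases hjj : j = j'
      · rw [if_pos hjj, if_pos (by rw [hjj])]
      · rw [if_neg hjj, if_neg (fun hc => hjj (e.injective (Subtype.ext hc)))]
    have hfspan : ∀ x : Fin N → ℝ, H.mulVec x = lam • x
        → x ∈ Submodule.span ℝ (Set.range f) := by
      intro x hx
      have h1 := aux_fiber_span H hH g μ heig hfull lam hx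
      have h2 : Set.range f = Set.range (fun j : {i // μ i = lam} => g j.1) := by
        rw [hf]
        exact Function.Surjective.range_comp e.surjective (fun j : {i // μ i = lam} => g j.1)
      rwa [h2]
    have := h lam m f hfeig hforth hfspan
    have hmem : ∀ x : Fin N, x ∈ Finset.univ.filter (fun i => μ i = lam) ↔ μ x = lam := by
      simp
    have hgen : ∀ w : Fin N, ∑ j, (f j w) ^ 2
        = ∑ i ∈ Finset.univ.filter (fun i => μ i = lam), g i w * g i w := by
      intro w
      calc ∑ j : Fin m, (f j w) ^ 2
          = ∑ j : {i // μ i = lam}, (g j.1 w) ^ 2 :=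
            Equiv.sum_comp e (fun j : {i // μ i = lam} => (g j.1 w) ^ 2)
        _ = ∑ i ∈ Finset.univ.filter (fun i => μ i = lam), g i w * g i w := by
            rw [Finset.sum_subtype _ hmem (fun i => g i w * g i w)]
            exact Finset.sum_congr rfl fun j _ => by rw [pow_two]
    have hu := hgen u
    have hv := hgen v
    rw [← hu, ← hv]
    exact this
end

section
/- Let H be a real symmetric N×N matrix and u ≠ v. Then u and v are cospectral (i.e. (H^k)_{u,u} = (H^k)_{v,v} for all k ≥ 0) if and only if the characteristic polynomials of the principal submatrices obtained by deleting row and column u, respectively row and column v, are equal: det(H∖u − λI) = det(H∖v − λI) for all λ. -/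
open Matrix Finset Polynomial

variable {n : ℕ}

/-- Fiberwise regrouping of a sum over indices by the value of `μ`. -/
lemma fiber_sum {R : Type*} [CommRing R] (μ : Fin n → ℝ) (c : Fin n → R) (φ : ℝ → R) :
    ∑ i, c i * φ (μ i)
      = ∑ t ∈ Finset.univ.image μ,
          (∑ i ∈ Finset.univ.filter (fun i => μ i = t), c i) * φ t := by
  rw [← Finset.sum_fiberwise_of_maps_to (g := μ)
      (fun i _ => Finset.mem_image_of_mem μ (Finset.mem_univ i)) (fun i => c i * φ (μ i))]
  refine Finset.sum_congr rfl fun t _ => ?_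
  rw [Finset.sum_mul]
  exact Finset.sum_congr rfl fun i hi => by rw [(Finset.mem_filter.mp hi).2]

lemma CX_ne_zero (t : ℝ) : (C t - X : ℝ[X]) ≠ 0 := by
  intro h
  have := congrArg (fun p => Polynomial.coeff p 1) h
  simp at this

/-- The product over `univ.erase i` depends only on the value `μ i`. -/
lemma prod_erase_eq (μ : Fin n → ℝ) (i : Fin n) :
    ∏ j ∈ Finset.univ.erase i, (C (μ j) - X : ℝ[X]) =
      (C (μ i) - X) ^ ((Finset.univ.filter (fun j => μ j = μ i)).card - 1)
        * ∏ t ∈ (Finset.univ.image μ).erase (μ i),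
            (C t - X) ^ (Finset.univ.filter (fun j => μ j = t)).card := by
  have key : ∏ j, (C (μ j) - X : ℝ[X])
      = ∏ t ∈ Finset.univ.image μ,
          (C t - X) ^ (Finset.univ.filter (fun j => μ j = t)).card := by
    rw [← Finset.prod_fiberwise_of_maps_to (g := μ)
        (fun j _ => Finset.mem_image_of_mem μ (Finset.mem_univ j))
        (fun j => (C (μ j) - X : ℝ[X]))]
    refine Finset.prod_congr rfl fun t _ => ?_
    rw [Finset.prod_congr rfl (fun j hj => by rw [(Finset.mem_filter.mp hj).2]),
      Finset.prod_const]
  obtain ⟨d, hd⟩ : ∃ d, (Finset.univ.filter (fun j => μ j = μ i)).card = d + 1 := by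
    have hi : i ∈ Finset.univ.filter (fun j => μ j = μ i) := by simp
    have := Finset.card_pos.mpr ⟨i, hi⟩
    exact ⟨_, (Nat.succ_pred_eq_of_pos this).symm⟩
  apply mul_right_cancel₀ (CX_ne_zero (μ i))
  rw [Finset.prod_erase_mul _ _ (Finset.mem_univ i), key,
    ← Finset.prod_erase_mul _ _ (Finset.mem_image_of_mem μ (Finset.mem_univ i)), hd,
    Nat.add_sub_cancel, pow_succ]
  ring

/-- Vanishing moments imply vanishing fiber weights. -/
lemma star_of_moments (μ c : Fin n → ℝ)
    (h : ∀ k : ℕ, ∑ i, c i * μ i ^ k = 0) (t0 : ℝ) :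
    ∑ i ∈ Finset.univ.filter (fun i => μ i = t0), c i = 0 := by
  by_cases ht0 : t0 ∈ Finset.univ.image μ
  · set T := Finset.univ.image μ with hT
    set p : ℝ[X] := ∏ t ∈ T.erase t0, (X - C t) with hp
    have hpe : ∀ x : ℝ, p.eval x = ∏ t ∈ T.erase t0, (x - t) := by
      intro x; simp [hp, eval_prod]
    have hsum : ∑ i, c i * p.eval (μ i) = 0 := by
      calc ∑ i, c i * p.eval (μ i)
          = ∑ i, ∑ k ∈ Finset.range (p.natDegree + 1), p.coeff k * (c i * μ i ^ k) := by
            refine Finset.sum_congr rfl fun i _ => ?_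
            rw [Polynomial.eval_eq_sum_range, Finset.mul_sum]
            exact Finset.sum_congr rfl fun k _ => by ring
        _ = ∑ k ∈ Finset.range (p.natDegree + 1), p.coeff k * ∑ i, c i * μ i ^ k := by
            rw [Finset.sum_comm]
            exact Finset.sum_congr rfl fun k _ => by rw [Finset.mul_sum]
        _ = 0 := by simp [h]
    rw [fiber_sum μ c (fun t => p.eval t)] at hsum
    rw [Finset.sum_eq_single_of_mem t0 ht0 (fun t ht hne => by
      rw [hpe, Finset.prod_eq_zero (Finset.mem_erase.mpr ⟨hne, ht⟩) (sub_self t), mul_zero])]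
      at hsum
    have hpt0 : p.eval t0 ≠ 0 := by
      rw [hpe]
      exact Finset.prod_ne_zero_iff.mpr fun t ht =>
        sub_ne_zero.mpr (Ne.symm (Finset.mem_erase.mp ht).1)
    exact (mul_eq_zero.mp hsum).resolve_right hpt0
  · have : Finset.univ.filter (fun i => μ i = t0) = ∅ := by
      refine Finset.filter_eq_empty_iff.mpr fun i _ => fun hit : μ i = t0 =>
        ht0 (hit ▸ Finset.mem_image_of_mem μ (Finset.mem_univ i))
    rw [this, Finset.sum_empty]

/-- Vanishing fiber weights imply the products identity. -/
lemma prods_of_star (μ c : Fin n → ℝ)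
    (h : ∀ t0 : ℝ, ∑ i ∈ Finset.univ.filter (fun i => μ i = t0), c i = 0) (lam : ℝ) :
    ∑ i, c i * ∏ j ∈ Finset.univ.erase i, (μ j - lam) = 0 := by
  have hF : (∑ i, C (c i) * ∏ j ∈ Finset.univ.erase i, (C (μ j) - X) : ℝ[X]) = 0 := by
    have := fiber_sum (R := ℝ[X]) μ (fun i => C (c i))
      (fun t => (C t - X) ^ ((Finset.univ.filter (fun j => μ j = t)).card - 1)
        * ∏ t' ∈ (Finset.univ.image μ).erase t,
            (C t' - X) ^ (Finset.univ.filter (fun j => μ j = t')).card)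
    rw [show (∑ i, C (c i) * ∏ j ∈ Finset.univ.erase i, (C (μ j) - X) : ℝ[X])
        = ∑ i, C (c i) * ((C (μ i) - X) ^ ((Finset.univ.filter (fun j => μ j = μ i)).card - 1)
            * ∏ t' ∈ (Finset.univ.image μ).erase (μ i),
                (C t' - X) ^ (Finset.univ.filter (fun j => μ j = t')).card)
      from Finset.sum_congr rfl fun i _ => by rw [prod_erase_eq], this]
    refine Finset.sum_eq_zero fun t _ => ?_
    rw [show (∑ i ∈ Finset.univ.filter (fun j => μ j = t), C (c i) : ℝ[X])
        = C (∑ i ∈ Finset.univ.filter (fun j => μ j = t), c i) from (map_sum C _ _).symm,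
      h t, map_zero, zero_mul]
  have := congrArg (Polynomial.eval lam) hF
  simpa [Polynomial.eval_finset_sum, eval_prod] using this

/-- The products identity implies vanishing fiber weights. -/
lemma star_of_prods (μ c : Fin n → ℝ)
    (h : ∀ lam : ℝ, ∑ i, c i * ∏ j ∈ Finset.univ.erase i, (μ j - lam) = 0) (t0 : ℝ) :
    ∑ i ∈ Finset.univ.filter (fun i => μ i = t0), c i = 0 := by
  by_cases ht0 : t0 ∈ Finset.univ.image μ
  swap
  · have : Finset.univ.filter (fun i => μ i = t0) = ∅ := by
      refine Finset.filter_eq_empty_iff.mpr fun i _ => fun hit : μ i = t0 =>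
        ht0 (hit ▸ Finset.mem_image_of_mem μ (Finset.mem_univ i))
    rw [this, Finset.sum_empty]
  set T := Finset.univ.image μ with hT
  set m : ℝ → ℕ := fun t => (Finset.univ.filter (fun j => μ j = t)).card with hm
  set W : ℝ → ℝ := fun t => ∑ i ∈ Finset.univ.filter (fun j => μ j = t), c i with hW
  set G : ℝ → ℝ[X] := fun t =>
    (C t - X) ^ (m t - 1) * ∏ t' ∈ T.erase t, (C t' - X) ^ m t' with hG
  have hF : ∑ t ∈ T, C (W t) * G t = 0 := by
    have h1 : (∑ i, C (c i) * ∏ j ∈ Finset.univ.erase i, (C (μ j) - X) : ℝ[X]) = 0 := by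
      apply Polynomial.funext
      intro r
      simpa [Polynomial.eval_finset_sum, eval_prod] using h r
    calc ∑ t ∈ T, C (W t) * G t
        = ∑ t ∈ T, (∑ i ∈ Finset.univ.filter (fun j => μ j = t), C (c i)) * G t := by
          refine Finset.sum_congr rfl fun t _ => ?_
          rw [hW, map_sum]
      _ = ∑ i, C (c i) * G (μ i) := (fiber_sum μ (fun i => C (c i)) G).symm
      _ = ∑ i, C (c i) * ∏ j ∈ Finset.univ.erase i, (C (μ j) - X) := by
          refine Finset.sum_congr rfl fun i _ => ?_
          rw [hG]
          rw [prod_erase_eq μ i]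
      _ = 0 := h1
  obtain ⟨d, hd⟩ : ∃ d, m t0 = d + 1 := by
    have hi : ∃ i, μ i = t0 := by
      obtain ⟨i, _, hit⟩ := Finset.mem_image.mp ht0
      exact ⟨i, hit⟩
    obtain ⟨i, hit⟩ := hi
    have : i ∈ Finset.univ.filter (fun j => μ j = t0) := by simp [hit]
    have := Finset.card_pos.mpr ⟨i, this⟩
    exact ⟨(m t0) - 1, (Nat.succ_pred_eq_of_pos this).symm⟩
  set S : ℝ[X] := ∑ t ∈ T.erase t0, C (W t) *
      ((C t - X) ^ (m t - 1) * ∏ t' ∈ (T.erase t).erase t0, (C t' - X) ^ m t') with hS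
  set R : ℝ[X] := ∏ t' ∈ T.erase t0, (C t' - X) ^ m t' with hR
  have hsplit : (C t0 - X) ^ d * (C (W t0) * R + (C t0 - X) * S) = 0 := by
    rw [← hF, ← Finset.add_sum_erase _ _ ht0]
    have hterm : ∀ t ∈ T.erase t0, C (W t) * G t
        = (C t0 - X) ^ (d + 1) * (C (W t) * ((C t - X) ^ (m t - 1)
            * ∏ t' ∈ (T.erase t).erase t0, (C t' - X) ^ m t')) := by
      intro t ht
      obtain ⟨hne, htT⟩ := Finset.mem_erase.mp ht
      have ht0' : t0 ∈ T.erase t := Finset.mem_erase.mpr ⟨Ne.symm hne, ht0⟩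
      simp only [hG]
      rw [← Finset.mul_prod_erase _ _ ht0', hd]
      ring
    rw [Finset.sum_congr rfl hterm, ← Finset.mul_sum, ← hS]
    have hGt0 : G t0 = (C t0 - X) ^ d * R := by
      simp only [hG, hR]
      rw [hd, Nat.add_sub_cancel]
    rw [hGt0]
    ring
  have hbr : C (W t0) * R + (C t0 - X) * S = 0 :=
    (mul_eq_zero.mp hsplit).resolve_left (pow_ne_zero _ (CX_ne_zero t0))
  have hev := congrArg (Polynomial.eval t0) hbr
  simp only [eval_add, eval_mul, eval_C, eval_sub, eval_X, sub_self, zero_mul, add_zero,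
    eval_zero, hR, eval_prod, eval_pow] at hev
  have hRne : (∏ t' ∈ T.erase t0, (t' - t0) ^ m t') ≠ 0 :=
    Finset.prod_ne_zero_iff.mpr fun t ht =>
      pow_ne_zero _ (sub_ne_zero.mpr (Finset.mem_erase.mp ht).1)
  have : W t0 = 0 := by
    rcases mul_eq_zero.mp hev with h' | h'
    · exact h'
    · exact absurd h' hRne
  exact this

lemma minor_eq_adjugate {N : ℕ} (A : Matrix (Fin N) (Fin N) ℝ) (u : Fin N) :
    (A.submatrix (Subtype.val : {i : Fin N // i ≠ u} → Fin N) Subtype.val).det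
      = adjugate A u u := by
  haveI : Unique {i : Fin N // ¬ i ≠ u} :=
    ⟨⟨⟨u, not_not_intro rfl⟩⟩, fun a => Subtype.ext (not_not.mp a.2)⟩
  rw [Matrix.adjugate_apply]
  set e : {i : Fin N // i ≠ u} ⊕ {i : Fin N // ¬ i ≠ u} ≃ Fin N :=
    Equiv.sumCompl (fun i => i ≠ u) with he
  rw [← Matrix.det_submatrix_equiv_self e]
  have hblock : (A.updateRow u (Pi.single u 1)).submatrix e e
      = Matrix.fromBlocks (A.submatrix Subtype.val Subtype.val)
          (Matrix.of fun i j => A i.1 j.1) 0 (Matrix.of fun _ _ => 1) := by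
    ext x y
    rcases x with x | x <;> rcases y with y | y
    · simp [he, Equiv.sumCompl, Matrix.updateRow_ne x.2]
    · simp [he, Equiv.sumCompl, Matrix.updateRow_ne x.2]
    · have hx : x.1 = u := not_not.mp x.2
      simp [he, Equiv.sumCompl, hx, Matrix.updateRow_self, Pi.single_eq_of_ne y.2]
    · have hx : x.1 = u := not_not.mp x.2
      have hy : y.1 = u := not_not.mp y.2
      simp [he, Equiv.sumCompl, hx, hy, Matrix.updateRow_self]
  rw [hblock, Matrix.det_fromBlocks_zero₂₁,
    Matrix.det_unique (Matrix.of fun (_ _ : {i : Fin N // ¬ i ≠ u}) => (1:ℝ))]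
  simp

lemma entry_formula {N : ℕ} (U : Matrix (Fin N) (Fin N) ℝ) (d : Fin N → ℝ) (u : Fin N) :
    (U * diagonal d * star U) u u = ∑ i, d i * (U u i) ^ 2 := by
  rw [Matrix.mul_apply]
  refine Finset.sum_congr rfl fun i _ => ?_
  simp only [Matrix.mul_diagonal, Matrix.star_apply, star_trivial]
  ring

section Conj

variable {N : ℕ} {U : Matrix (Fin N) (Fin N) ℝ}
  (hU1 : star U * U = 1) (hU2 : U * star U = 1)

include hU1 hU2

lemma conjPow (d : Fin N → ℝ) (k : ℕ) :
    (U * diagonal d * star U) ^ k = U * diagonal (fun i => d i ^ k) * star U := by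
  induction k with
  | zero => simp only [pow_zero, Matrix.diagonal_one, Matrix.mul_one, hU2]
  | succ k ih =>
    rw [pow_succ, ih, show U * diagonal (fun i => d i ^ k) * star U
          * (U * diagonal d * star U)
        = U * (diagonal (fun i => d i ^ k) * (star U * U) * diagonal d) * star U by
      simp only [Matrix.mul_assoc], hU1, Matrix.mul_one, Matrix.diagonal_mul_diagonal,
      show (fun i => d i ^ k * d i) = fun i => d i ^ (k + 1) from
        funext fun i => (pow_succ _ _).symm]

lemma det_star_eq : det (star U) = det U := by
  rw [Matrix.star_eq_conjTranspose, Matrix.conjTranspose_eq_transpose_of_trivial,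
    Matrix.det_transpose]

lemma adj_unitary : adjugate U = det U • star U := by
  calc adjugate U = (star U * U) * adjugate U := by rw [hU1, Matrix.one_mul]
    _ = star U * (U * adjugate U) := by rw [Matrix.mul_assoc]
    _ = star U * (det U • 1) := by rw [Matrix.mul_adjugate]
    _ = det U • star U := by rw [Matrix.mul_smul, Matrix.mul_one]

lemma adj_star_unitary : adjugate (star U) = det U • U := by
  calc adjugate (star U) = (U * star U) * adjugate (star U) := by rw [hU2, Matrix.one_mul]
    _ = U * (star U * adjugate (star U)) := by rw [Matrix.mul_assoc]
    _ = U * (det (star U) • 1) := by rw [Matrix.mul_adjugate]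
    _ = det U • U := by rw [Matrix.mul_smul, Matrix.mul_one, det_star_eq hU1 hU2]

lemma det_sq_one : det U * det U = 1 := by
  have := congrArg det hU2
  rwa [Matrix.det_mul, Matrix.det_one, det_star_eq hU1 hU2] at this

lemma adj_conj (d : Fin N → ℝ) :
    adjugate (U * diagonal d * star U)
      = U * diagonal (fun i => ∏ j ∈ Finset.univ.erase i, d j) * star U := by
  rw [Matrix.adjugate_mul_distrib, Matrix.adjugate_mul_distrib,
    adj_star_unitary hU1 hU2, adj_unitary hU1 hU2, Matrix.adjugate_diagonal]
  simp only [Matrix.smul_mul, Matrix.mul_smul, smul_smul, det_sq_one hU1 hU2, one_smul,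
    Matrix.mul_assoc]

end Conj

/-- Vertices `u ≠ v` of a real symmetric matrix `H` are cospectral if and only if
the characteristic polynomials of the principal submatrices obtained by deleting
row/column `u`, respectively `v`, agree: `det(H∖u − λI) = det(H∖v − λI)` for all `λ`. -/
theorem cospectral_iff_deleted_charpoly {N : ℕ} (H : Matrix (Fin N) (Fin N) ℝ)
    (hH : H.IsSymm) (u v : Fin N) (huv : u ≠ v) :
    (∀ k : ℕ, (H ^ k) u u = (H ^ k) v v) ↔
      ∀ lam : ℝ,
        (H.submatrix (Subtype.val : {i : Fin N // i ≠ u} → Fin N) Subtype.val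
            - lam • 1).det =
        (H.submatrix (Subtype.val : {i : Fin N // i ≠ v} → Fin N) Subtype.val
            - lam • 1).det := by
  have hHerm : H.IsHermitian := by
    rw [Matrix.IsHermitian, Matrix.conjTranspose_eq_transpose_of_trivial]
    exact hH
  set U := (hHerm.eigenvectorUnitary : Matrix (Fin N) (Fin N) ℝ) with hUdef
  set μ := hHerm.eigenvalues with hμdef
  have hU2 : U * star U = 1 := (Matrix.mem_unitaryGroup_iff).mp (hHerm.eigenvectorUnitary).2
  have hU1 : star U * U = 1 := (Matrix.mem_unitaryGroup_iff').mp (hHerm.eigenvectorUnitary).2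
  have hspec : H = U * diagonal μ * star U := by
    have h := hHerm.spectral_theorem
    rwa [show RCLike.ofReal ∘ hHerm.eigenvalues = μ from funext fun i => by simp [hμdef]] at h
  have hent : ∀ (k : ℕ) (w : Fin N), (H ^ k) w w = ∑ i, μ i ^ k * (U w i) ^ 2 := by
    intro k w
    have h1 := congrArg (fun A => A ^ k) hspec
    rw [conjPow hU1 hU2 μ k] at h1
    rw [h1]
    exact entry_formula U _ w
  have hminor : ∀ (lam : ℝ) (w : Fin N),
      (H.submatrix (Subtype.val : {i : Fin N // i ≠ w} → Fin N)
          (Subtype.val : {i : Fin N // i ≠ w} → Fin N) - lam • 1).det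
        = ∑ i, (∏ j ∈ Finset.univ.erase i, (μ j - lam)) * (U w i) ^ 2 := by
    intro lam w
    have hsub : H.submatrix (Subtype.val : {i : Fin N // i ≠ w} → Fin N)
          (Subtype.val : {i : Fin N // i ≠ w} → Fin N) - lam • 1
        = (H - lam • 1).submatrix (Subtype.val : {i : Fin N // i ≠ w} → Fin N)
          (Subtype.val : {i : Fin N // i ≠ w} → Fin N) := by
      ext i j
      simp [Matrix.submatrix_apply, Matrix.sub_apply, Matrix.smul_apply, Matrix.one_apply,
        Subtype.coe_inj]
    rw [hsub, minor_eq_adjugate]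
    have hHl : H - lam • 1 = U * diagonal (fun i => μ i - lam) * star U := by
      have h1 : (lam • 1 : Matrix (Fin N) (Fin N) ℝ) = U * (lam • 1) * star U := by
        rw [Matrix.mul_smul, Matrix.mul_one, Matrix.smul_mul, hU2]
      calc H - lam • 1 = U * diagonal μ * star U - U * (lam • 1) * star U := by
            rw [← h1, ← hspec]
        _ = U * (diagonal μ - lam • 1) * star U := by
            rw [Matrix.mul_sub, Matrix.sub_mul]
        _ = U * diagonal (fun i => μ i - lam) * star U := by
            rw [Matrix.smul_one_eq_diagonal, Matrix.diagonal_sub]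
    rw [hHl, adj_conj hU1 hU2]
    exact entry_formula U _ w
  have hsplit1 : ∀ k : ℕ, ∑ i, ((U u i) ^ 2 - (U v i) ^ 2) * μ i ^ k
      = (∑ i, μ i ^ k * (U u i) ^ 2) - ∑ i, μ i ^ k * (U v i) ^ 2 := by
    intro k
    rw [← Finset.sum_sub_distrib]
    exact Finset.sum_congr rfl fun i _ => by ring
  have hsplit2 : ∀ lam : ℝ,
      ∑ i, ((U u i) ^ 2 - (U v i) ^ 2) * ∏ j ∈ Finset.univ.erase i, (μ j - lam)
      = (∑ i, (∏ j ∈ Finset.univ.erase i, (μ j - lam)) * (U u i) ^ 2)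
        - ∑ i, (∏ j ∈ Finset.univ.erase i, (μ j - lam)) * (U v i) ^ 2 := by
    intro lam
    rw [← Finset.sum_sub_distrib]
    exact Finset.sum_congr rfl fun i _ => by ring
  constructor
  · intro hk lam
    rw [hminor lam u, hminor lam v]
    have hstar : ∀ t0 : ℝ,
        ∑ i ∈ Finset.univ.filter (fun i => μ i = t0), ((U u i) ^ 2 - (U v i) ^ 2) = 0 := by
      intro t0
      refine star_of_moments μ _ (fun k => ?_) t0
      rw [hsplit1 k, ← hent k u, ← hent k v, hk k, sub_self]
    have h0 := prods_of_star μ _ hstar lam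
    rw [hsplit2 lam] at h0
    linarith
  · intro hl k
    rw [hent k u, hent k v]
    have hstar : ∀ t0 : ℝ,
        ∑ i ∈ Finset.univ.filter (fun i => μ i = t0), ((U u i) ^ 2 - (U v i) ^ 2) = 0 := by
      intro t0
      refine star_of_prods μ _ (fun lam => ?_) t0
      rw [hsplit2 lam, ← hminor lam u, ← hminor lam v, hl lam, sub_self]
    have h0 : ∑ i, ((U u i) ^ 2 - (U v i) ^ 2) * μ i ^ k = 0 := by
      rw [fiber_sum μ _ (fun t => t ^ k)]
      exact Finset.sum_eq_zero fun t _ => by rw [hstar t, zero_mul]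
    rw [hsplit1 k] at h0
    linarith
end

section
/- Let H be a real symmetric matrix with two cospectral vertices u and v such that every eigenvalue of H whose eigenspace has nonzero projection onto span{e_u, e_v} is simple. Then u and v are strongly cospectral: every eigenvector x of H satisfies x_u = x_v or x_u = −x_v. -/
open Matrix

private lemma diag_pow_eq_aux {N : ℕ} (H : Matrix (Fin N) (Fin N) ℝ) (hH : H.IsHermitian)
    (k : ℕ) (w : Fin N) :
    (H ^ k) w w = ∑ i, hH.eigenvalues i ^ k * (hH.eigenvectorBasis i w)^2 := by
  set b := hH.eigenvectorBasis
  set μ := hH.eigenvalues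
  have hpow : ∀ (k : ℕ) i, (H ^ k) *ᵥ ⇑(b i) = (μ i ^ k) • ⇑(b i) := by
    intro k i
    induction k with
    | zero => simp
    | succ k ih =>
      rw [pow_succ, ← mulVec_mulVec, hH.mulVec_eigenvectorBasis, mulVec_smul, ih,
        pow_succ, smul_smul, mul_comm]
  have hexp : (Pi.single w (1:ℝ) : Fin N → ℝ) = ∑ i, (b i w) • ⇑(b i) := by
    have := b.sum_repr ((WithLp.equiv 2 (Fin N → ℝ)).symm (Pi.single w 1))
    have h2 : ∀ i, b.repr ((WithLp.equiv 2 (Fin N → ℝ)).symm (Pi.single w 1)) i = b i w := by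
      intro i
      rw [b.repr_apply_apply]
      simp [PiLp.inner_apply, Pi.single_apply, mul_comm]
    funext j
    have h3 := congrArg (fun f : EuclideanSpace ℝ (Fin N) => WithLp.ofLp f j) this
    simp only [h2, WithLp.ofLp_sum, WithLp.ofLp_smul] at h3
    exact h3.symm
  have h5 : (H^k) *ᵥ Pi.single w 1 = ∑ i, (b i w * μ i ^ k) • ⇑(b i) := by
    rw [hexp, show (H^k) *ᵥ (∑ i, (b i w) • ⇑(b i)) = ∑ i, (H^k) *ᵥ ((b i w) • ⇑(b i)) from by
      simp only [← mulVecLin_apply]; exact map_sum _ _ _]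
    simp only [mulVec_smul, hpow, smul_smul]
  have h6 : (H ^ k) w w = ((H^k) *ᵥ Pi.single w 1) w := by
    rw [mulVec_single]; simp
  rw [h6, h5, Finset.sum_apply]
  refine Finset.sum_congr rfl fun i _ => ?_
  show b i w * μ i ^ k * b i w = μ i ^ k * (b i w)^2
  ring

/-- If `u` and `v` are cospectral in a real symmetric matrix `H` and every eigenvalue
whose eigenspace has nonzero projection onto `span{e_u, e_v}` is simple, then `u` and
`v` are strongly cospectral: every eigenvector `x` satisfies `x u = x v` or `x u = -x v`. -/
theorem strongly_cospectral_of_simple {N : ℕ} (H : Matrix (Fin N) (Fin N) ℝ)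
    (hH : H.IsSymm) (u v : Fin N) (huv : u ≠ v)
    (hcospec : ∀ k : ℕ, (H ^ k) u u = (H ^ k) v v)
    (hsimple : ∀ lam : ℝ,
      (∃ x : Fin N → ℝ, x ≠ 0 ∧ H.mulVec x = lam • x ∧ (x u ≠ 0 ∨ x v ≠ 0)) →
      ∀ y z : Fin N → ℝ, H.mulVec y = lam • y → H.mulVec z = lam • z → z ≠ 0 →
        ∃ c : ℝ, y = c • z) :
    ∀ (lam : ℝ) (x : Fin N → ℝ), H.mulVec x = lam • x → x u = x v ∨ x u = - x v := by
  have hHerm : H.IsHermitian := by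
    rw [Matrix.IsHermitian, conjTranspose_eq_transpose_of_trivial]
    exact hH
  set b := hHerm.eigenvectorBasis with hb
  set μ := hHerm.eigenvalues with hμ
  intro lam x hx
  by_cases hx0 : x = 0
  · left; simp [hx0]
  by_cases hu0 : x u = 0 ∧ x v = 0
  · left; rw [hu0.1, hu0.2]
  have hwit : x u ≠ 0 ∨ x v ≠ 0 := not_and_or.mp hu0
  -- the eigenvalue lam is one of the μ i
  have key : ∀ i, (μ i - lam) * (x ⬝ᵥ ⇑(b i)) = 0 := by
    intro i
    have h1 : x ⬝ᵥ (H *ᵥ ⇑(b i)) = μ i * (x ⬝ᵥ ⇑(b i)) := by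
      rw [hHerm.mulVec_eigenvectorBasis, dotProduct_smul, smul_eq_mul]
    have h2 : x ⬝ᵥ (H *ᵥ ⇑(b i)) = lam * (x ⬝ᵥ ⇑(b i)) := by
      rw [dotProduct_mulVec, ← mulVec_transpose, hH, hx, smul_dotProduct, smul_eq_mul]
    rw [sub_mul, h1.symm.trans h2]
    ring
  obtain ⟨i₀, hi₀⟩ : ∃ i, μ i = lam := by
    by_contra h
    push_neg at h
    have hdz : ∀ i, x ⬝ᵥ ⇑(b i) = 0 := by
      intro i
      have := key i
      rcases mul_eq_zero.mp this with h' | h'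
      · exact absurd (by linarith [sub_eq_zero.mp h']) (h i)
      · exact h'
    apply hx0
    have hy : (WithLp.equiv 2 (Fin N → ℝ)).symm x = 0 := by
      have : ∀ i, b.repr ((WithLp.equiv 2 (Fin N → ℝ)).symm x) i = 0 := by
        intro i
        rw [b.repr_apply_apply]
        have := hdz i
        simpa [PiLp.inner_apply, dotProduct, mul_comm] using this
      have hr : b.repr ((WithLp.equiv 2 (Fin N → ℝ)).symm x) = 0 := by
        ext i; exact this i
      have h0 : b.repr ((WithLp.equiv 2 (Fin N → ℝ)).symm x) = b.repr 0 := by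
        rw [hr]; simp
      exact b.repr.injective h0
    exact congrArg (WithLp.equiv 2 (Fin N → ℝ)) hy
  -- cospectrality in terms of eigenvector components
  have hc : ∀ k : ℕ, ∑ i, μ i ^ k * ((b i u)^2 - (b i v)^2) = 0 := by
    intro k
    have h := hcospec k
    rw [diag_pow_eq_aux H hHerm k u, diag_pow_eq_aux H hHerm k v] at h
    simp only [mul_sub]
    rw [Finset.sum_sub_distrib, h, sub_self]
  have hpolysum : ∀ p : Polynomial ℝ, ∑ i, p.eval (μ i) * ((b i u)^2 - (b i v)^2) = 0 := by
    intro p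
    calc ∑ i, p.eval (μ i) * ((b i u)^2 - (b i v)^2)
        = ∑ i, ∑ n ∈ Finset.range (p.natDegree + 1),
            p.coeff n * (μ i ^ n * ((b i u)^2 - (b i v)^2)) := by
          refine Finset.sum_congr rfl fun i _ => ?_
          rw [Polynomial.eval_eq_sum_range, Finset.sum_mul]
          refine Finset.sum_congr rfl fun n _ => by ring
      _ = ∑ n ∈ Finset.range (p.natDegree + 1),
            p.coeff n * ∑ i, μ i ^ n * ((b i u)^2 - (b i v)^2) := by
          rw [Finset.sum_comm]
          exact Finset.sum_congr rfl fun n _ => by rw [Finset.mul_sum]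
      _ = 0 := by simp [hc]
  -- Lagrange interpolation to isolate the eigenvalue lam
  set s : Finset ℝ := Finset.image μ Finset.univ with hs
  have hlam_mem : lam ∈ s := Finset.mem_image.mpr ⟨i₀, Finset.mem_univ _, hi₀⟩
  set p : Polynomial ℝ := Lagrange.basis s id lam with hp
  have hps : ∀ i, p.eval (μ i) = if μ i = lam then 1 else 0 := by
    intro i
    by_cases h : μ i = lam
    · rw [h, if_pos rfl]
      exact Lagrange.eval_basis_self (Set.injOn_id _) hlam_mem
    · rw [if_neg h]
      have : (Lagrange.basis s id lam).eval (id (μ i)) = 0 :=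
        Lagrange.eval_basis_of_ne (fun hh => h hh.symm)
          (Finset.mem_image.mpr ⟨i, Finset.mem_univ _, rfl⟩)
      simpa using this
  have hfilter : ∑ i ∈ Finset.univ.filter (fun i => μ i = lam),
      ((b i u)^2 - (b i v)^2) = 0 := by
    have h1 : ∑ i, p.eval (μ i) * ((b i u)^2 - (b i v)^2)
        = ∑ i ∈ Finset.univ.filter (fun i => μ i = lam), ((b i u)^2 - (b i v)^2) := by
      rw [Finset.sum_filter]
      refine Finset.sum_congr rfl fun i _ => ?_
      rw [hps i]
      split <;> simp
    rw [← h1]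
    exact hpolysum p
  -- simplicity: all eigenvectors for lam are multiples of x
  have hs' := hsimple lam ⟨x, hx0, hx, hwit⟩
  have hbt : ∀ i, ∃ t : ℝ, μ i = lam → ⇑(b i) = t • x := by
    intro i
    by_cases h : μ i = lam
    · obtain ⟨t, ht⟩ := hs' ⇑(b i) x (by rw [hHerm.mulVec_eigenvectorBasis, show hHerm.eigenvalues i = lam from h]) hx hx0
      exact ⟨t, fun _ => ht⟩
    · exact ⟨0, fun hh => absurd hh h⟩
  choose t ht using hbt
  by_contra hcon
  push_neg at hcon
  have hd : x u ^ 2 - x v ^ 2 ≠ 0 := by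
    intro h
    have : (x u - x v) * (x u + x v) = 0 := by ring_nf; linarith [h]
    rcases mul_eq_zero.mp this with h' | h'
    · exact hcon.1 (by linarith)
    · exact hcon.2 (by linarith)
  have hsum : ∑ i ∈ Finset.univ.filter (fun i => μ i = lam), (t i)^2 * (x u ^ 2 - x v ^ 2)
      = 0 := by
    rw [← hfilter]
    refine Finset.sum_congr rfl fun i hi => ?_
    have hμi := (Finset.mem_filter.mp hi).2
    have hbi := ht i hμi
    have hbu : b i u = t i * x u := by
      have := congrFun hbi u; simpa using this
    have hbv : b i v = t i * x v := by
      have := congrFun hbi v; simpa using this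
    rw [hbu, hbv]; ring
  have hsum2 : ∑ i ∈ Finset.univ.filter (fun i => μ i = lam), (t i)^2 = 0 := by
    have := hsum
    rw [← Finset.sum_mul] at this
    exact (mul_eq_zero.mp this).resolve_right hd
  have hi₀f : i₀ ∈ Finset.univ.filter (fun i => μ i = lam) :=
    Finset.mem_filter.mpr ⟨Finset.mem_univ _, hi₀⟩
  have ht0 : (t i₀)^2 = 0 :=
    (Finset.sum_eq_zero_iff_of_nonneg (fun i _ => sq_nonneg _)).mp hsum2 i₀ hi₀f
  have ht0' : t i₀ = 0 := by
    exact pow_eq_zero_iff (by norm_num) |>.mp ht0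
  have hb0 : ⇑(b i₀) = (0 : Fin N → ℝ) := by
    rw [ht i₀ hi₀, ht0', zero_smul]
  exact b.orthonormal.ne_zero i₀ ((WithLp.equiv 2 (Fin N → ℝ)).injective hb0)
end

section
/- Let H be a real symmetric (N+2)×(N+2) matrix with blocks H_{S̄S̄} (N×N), coupling C = H_{S̄S} (N×2) and diagonal H_{SS} = E·I₂ on the last two coordinates u, v. Define the (N+4)×(N+4) matrix H_m with blocks: H_{S̄S̄}, couplings (1/√2)C to each of two copies of S, diagonal block H_{SS} = E·I₂ on each copy, and zero coupling between the copies. Then for every eigenvector (w, x_u, x_v)ᵀ of H with eigenvalue λ, the vector (w, x_u/√2, x_v/√2, x_u/√2, x_v/√2)ᵀ is an eigenvector of H_m with the same eigenvalue λ. -/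
open Matrix

/-- The original Hamiltonian: cloud `D`, coupling `C = H_{S̄S}` to the pair `S = {u,v}`,
diagonal block `E • I₂` on `S` (no direct `u`–`v` coupling). -/
def origH {β : Type} [Fintype β] [DecidableEq β]
    (D : Matrix β β ℝ) (C : Matrix β (Fin 2) ℝ) (E : ℝ) :
    Matrix (β ⊕ Fin 2) (β ⊕ Fin 2) ℝ :=
  Matrix.fromBlocks D C Cᵀ (E • 1)

/-- Coupling block from the cloud to the two dimer copies, scaled by `1/√2`. -/
noncomputable def dimerC {β : Type} (C : Matrix β (Fin 2) ℝ) : Matrix β (Fin 2 ⊕ Fin 2) ℝ :=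
  Matrix.of fun i s =>
    Sum.elim (fun a => C i a / Real.sqrt 2) (fun a => C i a / Real.sqrt 2) s

/-- The dimerized Hamiltonian `H_m`: each of `u`, `v` is replaced by a dimer, with
couplings scaled by `1/√2`, on-site energy `E` on each dimer site, and no coupling
between the copies. -/
noncomputable def dimerH {β : Type} [Fintype β] [DecidableEq β]
    (D : Matrix β β ℝ) (C : Matrix β (Fin 2) ℝ) (E : ℝ) :
    Matrix (β ⊕ (Fin 2 ⊕ Fin 2)) (β ⊕ (Fin 2 ⊕ Fin 2)) ℝ :=
  Matrix.fromBlocks D (dimerC C) (dimerC C)ᵀ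
    (Matrix.fromBlocks (E • 1) 0 0 (E • 1))

/-!
`L = 1 ⊕ (1/√2)·[I₂; I₂]`, which copies `(x_u, x_v)/√2` onto both dimers, intertwines the two
Hamiltonians: `H_m L = L H`. On the cloud rows this is `2 · (1/√2) · (1/√2) · C = C` (each site
of `S` is reached through two couplings scaled by `1/√2`); on the dimer rows it holds because
the copies are uncoupled and carry the same on-site energy `E`. So `L` maps eigenvectors of `H`
to eigenvectors of `H_m` with the same eigenvalue; this is the equitable partition theorem for the
partition `{S̄, {u, u'}, {v, v'}}`.
-/

theorem Matrix.mulVec_mulVec_eq_smul_of_mul_eq_mul {R m n : Type*} [CommSemiring R]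
    [Fintype m] [Fintype n] {A : Matrix m m R} {L : Matrix m n R} {B : Matrix n n R}
    (hAL : A * L = L * B) {lam : R} {x : n → R} (hx : B *ᵥ x = lam • x) :
    A *ᵥ (L *ᵥ x) = lam • (L *ᵥ x) := by
  rw [mulVec_mulVec, hAL, ← mulVec_mulVec, hx, mulVec_smul]

noncomputable def dimerLift (β : Type) [DecidableEq β] :
    Matrix (β ⊕ (Fin 2 ⊕ Fin 2)) (β ⊕ Fin 2) ℝ :=
  fromBlocks 1 0 0 (fromRows ((√2)⁻¹ • 1) ((√2)⁻¹ • 1))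

theorem dimerLift_mulVec {β : Type} [Fintype β] [DecidableEq β] (w : β → ℝ) (x : Fin 2 → ℝ) :
    dimerLift β *ᵥ Sum.elim w x = Sum.elim w (Sum.elim ((√2)⁻¹ • x) ((√2)⁻¹ • x)) := by
  simp [dimerLift, fromBlocks_mulVec, fromRows_mulVec, smul_mulVec]

theorem dimerC_eq_fromCols {β : Type} (C : Matrix β (Fin 2) ℝ) :
    dimerC C = fromCols ((√2)⁻¹ • C) ((√2)⁻¹ • C) := by
  ext i (a | a) <;> simp [dimerC, div_eq_inv_mul]

theorem dimerH_mul_dimerLift {β : Type} [Fintype β] [DecidableEq β]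
    (D : Matrix β β ℝ) (C : Matrix β (Fin 2) ℝ) (E : ℝ) :
    dimerH D C E * dimerLift β = dimerLift β * origH D C E := by
  have hsqrt : (√2)⁻¹ * (√2)⁻¹ + (√2)⁻¹ * (√2)⁻¹ = (1 : ℝ) := by
    rw [← mul_inv, Real.mul_self_sqrt zero_le_two]; norm_num
  simp only [dimerH, origH, dimerLift, dimerC_eq_fromCols, fromBlocks_multiply,
    fromCols_mul_fromRows, fromBlocks_mul_fromRows, transpose_fromCols, fromRows_mul]
  congr 1
  · simp
  · simp [smul_smul, ← add_smul, hsqrt]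
  · simp
  · simp [smul_smul, mul_comm]

theorem dimerized_eigenvector_general {β : Type} [Fintype β] [DecidableEq β]
    (D : Matrix β β ℝ) (C : Matrix β (Fin 2) ℝ) (E lam : ℝ)
    (w : β → ℝ) (xu xv : ℝ)
    (hx : (origH D C E).mulVec (Sum.elim w ![xu, xv]) =
      lam • Sum.elim w ![xu, xv]) :
    (dimerH D C E).mulVec
        (Sum.elim w (Sum.elim ![xu / Real.sqrt 2, xv / Real.sqrt 2]
          ![xu / Real.sqrt 2, xv / Real.sqrt 2])) =
      lam • Sum.elim w (Sum.elim ![xu / Real.sqrt 2, xv / Real.sqrt 2]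
          ![xu / Real.sqrt 2, xv / Real.sqrt 2]) := by
  have hlift : ![xu / Real.sqrt 2, xv / Real.sqrt 2] = (√2)⁻¹ • ![xu, xv] := by
    ext i; fin_cases i <;> simp [div_eq_inv_mul]
  rw [hlift, ← dimerLift_mulVec]
  exact mulVec_mulVec_eq_smul_of_mul_eq_mul (dimerH_mul_dimerLift D C E) hx

/-- Every eigenvector `(w, x_u, x_v)ᵀ` of `H` lifts to an eigenvector
`(w, x_u/√2, x_v/√2, x_u/√2, x_v/√2)ᵀ` of the dimerized `H_m` with the same eigenvalue. -/
theorem dimerized_eigenvector {β : Type} [Fintype β] [DecidableEq β]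
    (D : Matrix β β ℝ) (hD : D.IsSymm) (C : Matrix β (Fin 2) ℝ) (E lam : ℝ)
    (w : β → ℝ) (xu xv : ℝ)
    (hx : (origH D C E).mulVec (Sum.elim w ![xu, xv]) =
      lam • Sum.elim w ![xu, xv]) :
    (dimerH D C E).mulVec
        (Sum.elim w (Sum.elim ![xu / Real.sqrt 2, xv / Real.sqrt 2]
          ![xu / Real.sqrt 2, xv / Real.sqrt 2])) =
      lam • Sum.elim w (Sum.elim ![xu / Real.sqrt 2, xv / Real.sqrt 2]
          ![xu / Real.sqrt 2, xv / Real.sqrt 2]) :=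
  dimerized_eigenvector_general D C E lam w xu xv hx
end

section
/- With H, H_m as in the dimerization construction, the transfer fidelity of the symmetric dimer states equals that of the original single-site transfer: for all t, |⟨u₊| exp(i H_m t) |v₊⟩|² = |⟨u| exp(i H t) |v⟩|², where |u₊⟩ = (|u₁⟩+|u₂⟩)/√2 and |v₊⟩ = (|v₁⟩+|v₂⟩)/√2. -/
open Matrix

/-- The symmetric dimer state `|u₊⟩ = (|u₁⟩ + |u₂⟩)/√2` (as a complex vector). -/
noncomputable def uPlus (β : Type) : (β ⊕ (Fin 2 ⊕ Fin 2)) → ℂ :=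
  Sum.elim 0 (Sum.elim ![((Real.sqrt 2 : ℝ) : ℂ)⁻¹, 0] ![((Real.sqrt 2 : ℝ) : ℂ)⁻¹, 0])

/-- The symmetric dimer state `|v₊⟩ = (|v₁⟩ + |v₂⟩)/√2` (as a complex vector). -/
noncomputable def vPlus (β : Type) : (β ⊕ (Fin 2 ⊕ Fin 2)) → ℂ :=
  Sum.elim 0 (Sum.elim ![0, ((Real.sqrt 2 : ℝ) : ℂ)⁻¹] ![0, ((Real.sqrt 2 : ℝ) : ℂ)⁻¹])

/- ### Auxiliary material -/

theorem exp_intertwine {n m : Type} [Fintype n] [DecidableEq n] [Fintype m] [DecidableEq m]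
    (A : Matrix n n ℂ) (B : Matrix m m ℂ) (V : Matrix n m ℂ) (h : A * V = V * B) :
    NormedSpace.exp A * V = V * NormedSpace.exp B := by
  have hpow : ∀ k : ℕ, A ^ k * V = V * B ^ k := by
    intro k
    induction k with
    | zero => simp
    | succ k ih =>
      rw [pow_succ, pow_succ, Matrix.mul_assoc, h, ← Matrix.mul_assoc, ih, Matrix.mul_assoc]
  have hsumA : Summable fun k : ℕ => ((k.factorial : ℂ))⁻¹ • A ^ k := by
    letI : SeminormedRing (Matrix n n ℂ) := Matrix.linftyOpSemiNormedRing
    letI : NormedRing (Matrix n n ℂ) := Matrix.linftyOpNormedRing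
    letI : NormedAlgebra ℂ (Matrix n n ℂ) := Matrix.linftyOpNormedAlgebra
    exact NormedSpace.expSeries_summable' A
  have hsumB : Summable fun k : ℕ => ((k.factorial : ℂ))⁻¹ • B ^ k := by
    letI : SeminormedRing (Matrix m m ℂ) := Matrix.linftyOpSemiNormedRing
    letI : NormedRing (Matrix m m ℂ) := Matrix.linftyOpNormedRing
    letI : NormedAlgebra ℂ (Matrix m m ℂ) := Matrix.linftyOpNormedAlgebra
    exact NormedSpace.expSeries_summable' B
  let L : Matrix n n ℂ →L[ℂ] Matrix n m ℂ :=
    { toFun := fun X => X * V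
      map_add' := fun X Y => Matrix.add_mul X Y V
      map_smul' := fun c X => Matrix.smul_mul c X V
      cont := continuous_id.matrix_mul continuous_const }
  let R : Matrix m m ℂ →L[ℂ] Matrix n m ℂ :=
    { toFun := fun Y => V * Y
      map_add' := fun X Y => Matrix.mul_add V X Y
      map_smul' := fun c X => (Matrix.mul_smul V c X)
      cont := continuous_const.matrix_mul continuous_id }
  have hL : NormedSpace.exp A * V = L (NormedSpace.exp A) := rfl
  have hR : V * NormedSpace.exp B = R (NormedSpace.exp B) := rfl
  rw [hL, hR, NormedSpace.exp_eq_tsum ℂ, NormedSpace.exp_eq_tsum ℂ,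
    L.map_tsum hsumA, R.map_tsum hsumB]
  congr 1
  funext k
  show ((k.factorial : ℂ))⁻¹ • A ^ k * V = V * (((k.factorial : ℂ))⁻¹ • B ^ k)
  rw [Matrix.smul_mul, hpow k, Matrix.mul_smul]

noncomputable def sq2i : ℂ := ((Real.sqrt 2 : ℝ) : ℂ)⁻¹

noncomputable def Wmat : Matrix (Fin 2 ⊕ Fin 2) (Fin 2) ℂ :=
  Matrix.of (Sum.elim (fun a b => if a = b then sq2i else 0)
    (fun a b => if a = b then sq2i else 0))

noncomputable def Vmat (β : Type) [Fintype β] [DecidableEq β] :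
    Matrix (β ⊕ (Fin 2 ⊕ Fin 2)) (β ⊕ Fin 2) ℂ :=
  Matrix.fromBlocks 1 0 0 Wmat

lemma sqrt2_sq : ((Real.sqrt 2 : ℝ) : ℂ) * ((Real.sqrt 2 : ℝ) : ℂ) = 2 := by
  have h : Real.sqrt 2 * Real.sqrt 2 = 2 := Real.mul_self_sqrt (by norm_num)
  exact_mod_cast congrArg (Complex.ofReal) h

lemma sq2i_mul_self : sq2i * sq2i = 2⁻¹ := by
  unfold sq2i
  rw [← mul_inv, sqrt2_sq]

lemma half_sum (r : ℝ) :
    (r : ℂ) / ((Real.sqrt 2 : ℝ) : ℂ) * sq2i + (r : ℂ) / ((Real.sqrt 2 : ℝ) : ℂ) * sq2i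
      = (r : ℂ) := by
  have h1 : (r : ℂ) / ((Real.sqrt 2 : ℝ) : ℂ) * sq2i = (r : ℂ) * 2⁻¹ := by
    unfold sq2i
    rw [div_eq_mul_inv, mul_assoc, ← mul_inv, sqrt2_sq]
  rw [h1]
  ring

lemma block1 {β : Type} [Fintype β] (C : Matrix β (Fin 2) ℝ) :
    (dimerC C).map Complex.ofReal * Wmat = C.map Complex.ofReal := by
  ext i j
  simp [Matrix.mul_apply, Wmat, dimerC, Fintype.sum_sum_type, mul_ite, mul_zero,
    Finset.sum_ite_eq']
  exact half_sum _

lemma block2 {β : Type} [Fintype β] (C : Matrix β (Fin 2) ℝ) :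
    ((dimerC C)ᵀ).map Complex.ofReal = Wmat * (Cᵀ).map Complex.ofReal := by
  ext s j
  rcases s with a | a <;>
    simp [Matrix.mul_apply, Wmat, dimerC, ite_mul, zero_mul, Finset.sum_ite_eq, sq2i,
      div_eq_mul_inv, mul_comm]

lemma mapE (E : ℝ) {n : Type} [Fintype n] [DecidableEq n] :
    ((E • (1 : Matrix n n ℝ))).map Complex.ofReal = (E : ℂ) • (1 : Matrix n n ℂ) := by
  ext a b
  by_cases hab : a = b <;> simp [Matrix.one_apply, hab]

lemma block3 (z : ℂ) :
    (Matrix.fromBlocks (z • 1) 0 0 (z • (1 : Matrix (Fin 2) (Fin 2) ℂ))) * Wmat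
      = Wmat * (z • (1 : Matrix (Fin 2) (Fin 2) ℂ)) := by
  have h1 : (Matrix.fromBlocks (z • 1) 0 0 (z • (1 : Matrix (Fin 2) (Fin 2) ℂ)))
      = z • (1 : Matrix (Fin 2 ⊕ Fin 2) (Fin 2 ⊕ Fin 2) ℂ) := by
    ext s t
    rcases s with a | a <;> rcases t with b | b <;>
      simp [Matrix.one_apply, Sum.inl.injEq, Sum.inr.injEq]
  rw [h1]
  exact (Matrix.smul_mul z 1 Wmat).trans (((congrArg (z • ·) (Matrix.one_mul Wmat)).trans
    (congrArg (z • ·) (Matrix.mul_one Wmat)).symm).trans (Matrix.mul_smul Wmat z 1).symm)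

lemma WtW : Wmatᵀ * Wmat = 1 := by
  ext a b
  simp [Matrix.mul_apply, Wmat, Fintype.sum_sum_type, Matrix.one_apply, ite_mul, zero_mul,
    mul_ite, mul_zero, Finset.sum_ite_eq]
  rcases eq_or_ne a b with h | h
  · subst h
    simp [sq2i_mul_self]
    norm_num
  · simp [h, Ne.symm h]

lemma VtV (β : Type) [Fintype β] [DecidableEq β] : (Vmat β)ᵀ * Vmat β = 1 := by
  unfold Vmat
  rw [Matrix.fromBlocks_transpose, Matrix.fromBlocks_multiply]
  simp [WtW, Matrix.fromBlocks_one]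

lemma base_intertwine {β : Type} [Fintype β] [DecidableEq β]
    (D : Matrix β β ℝ) (C : Matrix β (Fin 2) ℝ) (E : ℝ) :
    ((dimerH D C E).map Complex.ofReal) * Vmat β
      = Vmat β * ((origH D C E).map Complex.ofReal) := by
  unfold dimerH origH Vmat
  rw [Matrix.fromBlocks_map, Matrix.fromBlocks_map, Matrix.fromBlocks_map,
    Matrix.fromBlocks_multiply, Matrix.fromBlocks_multiply]
  simp only [Matrix.map_zero _ Complex.ofReal_zero, mapE, Matrix.mul_one, Matrix.mul_zero,
    Matrix.zero_mul, Matrix.one_mul, add_zero, zero_add, block1, block2, block3]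
  congr 1
  exact block3 _

lemma uPlus_eq (β : Type) [Fintype β] [DecidableEq β] :
    ∀ i, uPlus β i = Vmat β i (Sum.inr 0) := by
  intro i
  rcases i with b | s
  · simp [uPlus, Vmat]
  · rcases s with a | a <;> fin_cases a <;>
      simp [uPlus, Vmat, Wmat, sq2i]

lemma vPlus_eq (β : Type) [Fintype β] [DecidableEq β] :
    ∀ i, vPlus β i = Vmat β i (Sum.inr 1) := by
  intro i
  rcases i with b | s
  · simp [vPlus, Vmat]
  · rcases s with a | a <;> fin_cases a <;>
      simp [vPlus, Vmat, Wmat, sq2i]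

lemma dot_eq {β : Type} [Fintype β] [DecidableEq β]
    (N : Matrix (β ⊕ (Fin 2 ⊕ Fin 2)) (β ⊕ (Fin 2 ⊕ Fin 2)) ℂ) :
    dotProduct (uPlus β) (N.mulVec (vPlus β))
      = ((Vmat β)ᵀ * (N * Vmat β)) (Sum.inr 0) (Sum.inr 1) := by
  simp only [dotProduct, Matrix.mulVec, Matrix.mul_apply, Matrix.transpose_apply,
    uPlus_eq β, vPlus_eq β]

/-- The transfer fidelity of the symmetric dimer states under `H_m` equals the original
single-site transfer fidelity under `H`:
`|⟨u₊| exp(i H_m t) |v₊⟩|² = |⟨u| exp(i H t) |v⟩|²` for all `t`. -/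
theorem dimerized_fidelity_eq {β : Type} [Fintype β] [DecidableEq β]
    (D : Matrix β β ℝ) (hD : D.IsSymm) (C : Matrix β (Fin 2) ℝ) (E : ℝ) :
    ∀ t : ℝ,
      ‖dotProduct (uPlus β)
          ((NormedSpace.exp ((Complex.I * (t : ℂ)) •
              ((dimerH D C E).map Complex.ofReal))).mulVec (vPlus β))‖ ^ 2 =
      ‖(NormedSpace.exp ((Complex.I * (t : ℂ)) •
          ((origH D C E).map Complex.ofReal))) (Sum.inr 0) (Sum.inr 1)‖ ^ 2 := by
  intro t
  set A := (Complex.I * (t : ℂ)) • ((dimerH D C E).map Complex.ofReal) with hA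
  set B := (Complex.I * (t : ℂ)) • ((origH D C E).map Complex.ofReal) with hB
  have hAB : A * Vmat β = Vmat β * B := by
    rw [hA, hB, Matrix.smul_mul, base_intertwine, Matrix.mul_smul]
  have hexp := exp_intertwine A B (Vmat β) hAB
  have hmain : dotProduct (uPlus β) ((NormedSpace.exp A).mulVec (vPlus β))
      = (NormedSpace.exp B) (Sum.inr 0) (Sum.inr 1) := by
    rw [dot_eq, hexp, ← Matrix.mul_assoc, VtV, Matrix.one_mul]
  rw [hmain]
end
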